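/- For every nonnegative integer n and every real x, the limit of p_n(x; 1/s, 1/t) as (s,t)→(0,0) with s,t>0 exists and equals (2√2)^n·h_n(x/(2√2)), a rescaled monic Hermite polynomial. -/

import Mathlib

open Filter Real

/-- Pochhammer symbol `(a)_m = a (a+1) ⋯ (a+m-1)`. -/
noncomputable def poch (a : ℝ) (m : ℕ) : ℝ := ∏ j ∈ Finset.range m, (a + j)

/-- Monic Hermite polynomial of degree `n`. -/
noncomputable def monicHermite (n : ℕ) (x : ℝ) : ℝ :=
  (n.factorial : ℝ) * ∑ m ∈ Finset.range (n / 2 + 1),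
    (-1 : ℝ) ^ m * x ^ (n - 2 * m) / (4 ^ m * m.factorial * (n - 2 * m).factorial)

/-- Monic Laguerre polynomial of degree `n` with parameter `α`. -/
noncomputable def monicLaguerre (α : ℝ) (n : ℕ) (x : ℝ) : ℝ :=
  (-1 : ℝ) ^ n * n.factorial * ∑ k ∈ Finset.range (n + 1),
    (-1 : ℝ) ^ k * (poch (α + k + 1) (n - k) / ((n - k).factorial * k.factorial)) * x ^ k

/-- Monic Jacobi polynomial of degree `n` with parameters `α, β`. -/
noncomputable def monicJacobi (α β : ℝ) (n : ℕ) (x : ℝ) : ℝ :=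
  ((n.factorial : ℝ) / poch (n + α + β + 1) n) *
    ∑ k ∈ Finset.range (n + 1),
      (poch (n + α - k + 1) k / k.factorial) *
      (poch (β + k + 1) (n - k) / (n - k).factorial) *
      (x - 1) ^ (n - k) * (x + 1) ^ k

/-- Monic Racah polynomial of degree `n` in the variable `y`. -/
noncomputable def monicRacah (α β N δ : ℝ) (n : ℕ) (y : ℝ) : ℝ :=
  (1 / poch (n + α + β + 1) n) *
    ∑ k ∈ Finset.range (n + 1),
      (poch (-(n : ℝ)) k * poch (n + α + β + 1) k / k.factorial) *
      poch (α + k + 1) (n - k) * poch (β + δ + k + 1) (n - k) * poch (k - N) (n - k) *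
      ∏ j ∈ Finset.range k, ((j : ℝ) * (j + δ - N) - y)

/-- Monic Hahn polynomial of degree `n`. -/
noncomputable def monicHahn (α β N : ℝ) (n : ℕ) (x : ℝ) : ℝ :=
  (1 / poch (n + α + β + 1) n) *
    ∑ k ∈ Finset.range (n + 1),
      (poch (-(n : ℝ)) k * poch (n + α + β + 1) k * poch (-x) k / k.factorial) *
      poch (α + k + 1) (n - k) * poch (k - N) (n - k)

/-- Monic Meixner polynomial of degree `n`. -/
noncomputable def monicMeixner (b c : ℝ) (n : ℕ) (x : ℝ) : ℝ :=
  (c / (c - 1)) ^ n * ∑ k ∈ Finset.range (n + 1),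
    (poch (-(n : ℝ)) k * poch (-x) k / k.factorial) * poch (b + k) (n - k) * (1 - 1 / c) ^ k

/-- Monic Krawtchouk polynomial of degree `n`. -/
noncomputable def monicKrawtchouk (p N : ℝ) (n : ℕ) (x : ℝ) : ℝ :=
  p ^ n * ∑ k ∈ Finset.range (n + 1),
    (poch (-(n : ℝ)) k * poch (-x) k / k.factorial) * poch (k - N) (n - k) * (1 / p) ^ k

/-- `ρ = (α+β)^{3/2} / (αβ)^{1/2}`. -/
noncomputable def jacobiRho (α β : ℝ) : ℝ := (α + β) ^ ((3 : ℝ) / 2) / Real.sqrt (α * β)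

/-- `σ = (α-β)/(α+β)`. -/
noncomputable def jacobiSigma (α β : ℝ) : ℝ := (α - β) / (α + β)

/-- Uniformly rescaled monic Jacobi polynomial `p_n(x; α, β) = ρ^n p_n^{(α,β)}(ρ⁻¹x - σ)`. -/
noncomputable def rescaledJacobi (α β : ℝ) (n : ℕ) (x : ℝ) : ℝ :=
  jacobiRho α β ^ n * monicJacobi α β n (x / jacobiRho α β - jacobiSigma α β)

/-- `ρ = ((α+β)³/(αβ(β+δ)(N+α+β)(δ-α)N))^{1/2}` with `β = bα`, `δ = (bdν+1)α`, `N = bν`. -/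
noncomputable def racahRho (α b d ν : ℝ) : ℝ :=
  Real.sqrt ((α + b * α) ^ 3 /
    (α * (b * α) * (b * α + (b * d * ν + 1) * α) * (b * ν + α + b * α) *
      ((b * d * ν + 1) * α - α) * (b * ν)))

/-- `σ = -N(α+1)(β+δ+1)/(α+β+2)` with `β = bα`, `δ = (bdν+1)α`, `N = bν`. -/
noncomputable def racahSigma (α b d ν : ℝ) : ℝ :=
  -((b * ν) * (α + 1) * (b * α + (b * d * ν + 1) * α + 1)) / (α + b * α + 2)

/-- Rescaled monic Racah polynomial `p_n(x; α, b, d, ν) = ρ^n r_n(ρ⁻¹x - σ; α, bα, bν, (bdν+1)α)`. -/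
noncomputable def rescaledRacah (α b d ν : ℝ) (n : ℕ) (x : ℝ) : ℝ :=
  racahRho α b d ν ^ n *
    monicRacah α (b * α) (b * ν) ((b * d * ν + 1) * α) n
      (x / racahRho α b d ν - racahSigma α b d ν)

section JacobiHermiteAux
open Finset
open Filter Real Finset


lemma poch_zero (a : ℝ) : poch a 0 = 1 := by simp [poch]

lemma poch_succ (a : ℝ) (m : ℕ) : poch a (m+1) = poch a m * (a + m) := by
  simp [poch, Finset.prod_range_succ]

lemma poch_succ' (a : ℝ) (m : ℕ) : poch a (m+1) = a * poch (a+1) m := by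
  rw [poch, Finset.prod_range_succ']
  rw [show ∏ x ∈ Finset.range m, (a + ↑(x+1)) = ∏ j ∈ Finset.range m, (a + 1 + ↑j) from
    Finset.prod_congr rfl (by intro j _; push_cast; ring)]
  simp [poch, mul_comm]

lemma poch_mul_add (a : ℝ) (m : ℕ) : (a + m) * poch a m = a * poch (a+1) m := by
  rw [← poch_succ', poch_succ]; ring

lemma poch_pos {a : ℝ} (ha : 0 < a) (m : ℕ) : 0 < poch a m := by
  apply Finset.prod_pos
  intro j _
  positivity

/-- falling factorial -/
noncomputable def ffall (A : ℝ) (m : ℕ) : ℝ := ∏ j ∈ Finset.range m, (A - j)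

lemma ffall_zero (A : ℝ) : ffall A 0 = 1 := by simp [ffall]

lemma ffall_succ (A : ℝ) (m : ℕ) : ffall A (m+1) = ffall A m * (A - m) := by
  simp [ffall, Finset.prod_range_succ]

lemma ffall_succ' (A : ℝ) (m : ℕ) : ffall A (m+1) = A * ffall (A-1) m := by
  rw [ffall, Finset.prod_range_succ']
  rw [show ∏ x ∈ Finset.range m, (A - ↑(x+1)) = ∏ j ∈ Finset.range m, (A - 1 - ↑j) from
    Finset.prod_congr rfl (by intro j _; push_cast; ring)]
  simp [ffall, mul_comm]

lemma poch_eq_ffall (A : ℝ) (k : ℕ) : poch (A - k + 1) k = ffall A k := by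
  rw [poch, ffall, ← Finset.prod_range_reflect (fun j => A - j) k]
  apply Finset.prod_congr rfl
  intro j hj
  rw [Finset.mem_range] at hj
  have : ((k - 1 - j : ℕ) : ℝ) = (k : ℝ) - 1 - j := by
    have h1 : j ≤ k - 1 := by omega
    have h2 : (1:ℕ) ≤ k := by omega
    push_cast [Nat.cast_sub h1, Nat.cast_sub h2]
    ring
  rw [this]; ring

/-- `poch (β + k + 1) (n - k) = ffall (n + β) (n - k)` -/
lemma poch_shift_eq_ffall (β : ℝ) (n k : ℕ) (hk : k ≤ n) :
    poch (β + k + 1) (n - k) = ffall ((n:ℝ) + β) (n - k) := by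
  rw [poch, ffall, ← Finset.prod_range_reflect (fun j => (n:ℝ) + β - j) (n-k)]
  apply Finset.prod_congr rfl
  intro j hj
  rw [Finset.mem_range] at hj
  have : ((n - k - 1 - j : ℕ) : ℝ) = (n : ℝ) - k - 1 - j := by
    have : j + 1 + k ≤ n := by omega
    push_cast [Nat.cast_sub (show j ≤ n-k-1 by omega), Nat.cast_sub (show 1 ≤ n - k by omega), Nat.cast_sub hk]
    ring
  rw [this]; ring

/-- Pascal helper for sums against binomial coefficients -/
lemma sum_choose_succ (g : ℕ → ℝ) (j : ℕ) :
    ∑ i ∈ Finset.range (j+2), ((j+1).choose i : ℝ) * g i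
      = ∑ i ∈ Finset.range (j+1), (j.choose i : ℝ) * g i
        + ∑ i ∈ Finset.range (j+1), (j.choose i : ℝ) * g (i+1) := by
  rw [Finset.sum_range_succ' (fun i => ((j+1).choose i : ℝ) * g i) (j+1)]
  have h1 : ∀ i, ((j+1).choose (i+1) : ℝ) = (j.choose i : ℝ) + (j.choose (i+1) : ℝ) := by
    intro i; rw [Nat.choose_succ_succ]; push_cast; ring
  have h2 : ∑ i ∈ Finset.range (j+1), ((j+1).choose (i+1) : ℝ) * g (i+1)
      = ∑ i ∈ Finset.range (j+1), ((j.choose i : ℝ) * g (i+1) + (j.choose (i+1) : ℝ) * g (i+1)) := by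
    apply Finset.sum_congr rfl; intro i _; rw [h1]; ring
  rw [h2, Finset.sum_add_distrib]
  have h3 : ∑ i ∈ Finset.range (j+1), (j.choose (i+1) : ℝ) * g (i+1)
      = ∑ i ∈ Finset.range j, (j.choose (i+1) : ℝ) * g (i+1) := by
    rw [Finset.sum_range_succ]; simp
  have h4 : ∑ i ∈ Finset.range (j+1), (j.choose i : ℝ) * g i
      = ∑ i ∈ Finset.range j, (j.choose (i+1) : ℝ) * g (i+1) + (j.choose 0 : ℝ) * g 0 := by
    rw [Finset.sum_range_succ' (fun i => (j.choose i : ℝ) * g i) j]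
  rw [h3, h4]
  simp
  ring

lemma ffall_bracket (A B : ℝ) (j : ℕ) :
    B * ffall A j + A * ffall (A-1) j = (A+B-j) * ffall A j := by
  cases j with
  | zero => simp [ffall_zero]; ring
  | succ m =>
    rw [ffall_succ', ffall_succ (A-1) m]
    have : ffall (A-1) (m+1) = ffall (A-1) m * (A-1-m) := ffall_succ (A-1) m
    push_cast
    nlinarith [ffall_succ' A m]

noncomputable def LLsum (x A B : ℝ) (n : ℕ) : ℝ :=
  ∑ k ∈ Finset.range (n+1), (n.choose k : ℝ) * ffall A k * ffall B (n-k) * (x-1)^(n-k) * (x+1)^k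

noncomputable def RRsum (x A B : ℝ) (n : ℕ) : ℝ :=
  ∑ k ∈ Finset.range (n+1), (n.choose k : ℝ) * poch (A+B+1-n) k * ffall A (n-k) * (x-1)^k * 2^(n-k)

lemma LL_rec (x A B : ℝ) (n : ℕ) :
    LLsum x A B (n+1) = B*(x-1)*LLsum x A (B-1) n + A*(x+1)*LLsum x (A-1) B n := by
  have hs := sum_choose_succ (fun k => ffall A k * ffall B (n+1-k) * (x-1)^(n+1-k) * (x+1)^k) n
  rw [LLsum]
  rw [show ∑ k ∈ Finset.range (n+2), ((n+1).choose k : ℝ) * ffall A k * ffall B (n+1-k) * (x-1)^(n+1-k) * (x+1)^k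
      = ∑ k ∈ Finset.range (n+2), ((n+1).choose k : ℝ) * (ffall A k * ffall B (n+1-k) * (x-1)^(n+1-k) * (x+1)^k) from
    Finset.sum_congr rfl (by intros; ring)]
  rw [hs]
  congr 1
  · rw [LLsum, Finset.mul_sum]
    apply Finset.sum_congr rfl
    intro k hk
    rw [Finset.mem_range] at hk
    have hk' : k ≤ n := by omega
    have h1 : n + 1 - k = (n - k) + 1 := by omega
    rw [h1, ffall_succ', pow_succ]
    have h2 : (B:ℝ) - 1 - ((n-k : ℕ):ℝ) = (B-1) - ((n-k : ℕ):ℝ) := by ring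
    ring
  · rw [LLsum, Finset.mul_sum]
    apply Finset.sum_congr rfl
    intro k hk
    have h1 : n + 1 - (k+1) = n - k := by omega
    rw [h1, ffall_succ', pow_succ]
    ring

lemma RR_rec (x A B : ℝ) (n : ℕ) :
    RRsum x A B (n+1) = 2*A*RRsum x (A-1) B n + (A+B-n)*(x-1)*RRsum x A B n := by
  have hs := sum_choose_succ (fun k => poch (A+B+1-((n+1:ℕ):ℝ)) k * ffall A (n+1-k) * (x-1)^k * 2^(n+1-k)) n
  rw [RRsum]
  rw [show ∑ k ∈ Finset.range (n+2), ((n+1).choose k : ℝ) * poch (A+B+1-((n+1:ℕ):ℝ)) k * ffall A (n+1-k) * (x-1)^k * 2^(n+1-k)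
      = ∑ k ∈ Finset.range (n+2), ((n+1).choose k : ℝ) * (poch (A+B+1-((n+1:ℕ):ℝ)) k * ffall A (n+1-k) * (x-1)^k * 2^(n+1-k)) from
    Finset.sum_congr rfl (by intros; ring)]
  rw [hs]
  congr 1
  · rw [RRsum, Finset.mul_sum]
    have harg : A+B+1-((n+1:ℕ):ℝ) = (A-1)+B+1-(n:ℝ) := by push_cast; ring
    apply Finset.sum_congr rfl
    intro k hk
    rw [Finset.mem_range] at hk
    have hk' : k ≤ n := by omega
    have h1 : n + 1 - k = (n - k) + 1 := by omega
    rw [h1, ffall_succ', pow_succ, harg]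
    ring
  · rw [RRsum, Finset.mul_sum]
    have harg : A+B+1-((n+1:ℕ):ℝ) = (A+B-(n:ℝ)) := by push_cast; ring
    apply Finset.sum_congr rfl
    intro k hk
    have h1 : n + 1 - (k+1) = n - k := by omega
    rw [h1, harg, poch_succ', pow_succ]
    have harg2 : (A+B-(n:ℝ))+1 = A+B+1-(n:ℝ) := by ring
    rw [harg2]
    ring

lemma RR_contig (x A B : ℝ) (n : ℕ) :
    B * RRsum x A (B-1) n + A * RRsum x (A-1) B n = (A+B-n) * RRsum x A B n := by
  rw [RRsum, RRsum, RRsum, Finset.mul_sum, Finset.mul_sum, Finset.mul_sum, ← Finset.sum_add_distrib]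
  apply Finset.sum_congr rfl
  intro k hk
  rw [Finset.mem_range] at hk
  have hk' : k ≤ n := by omega
  have harg1 : A+(B-1)+1-(n:ℝ) = A+B-n := by ring
  have harg2 : (A-1)+B+1-(n:ℝ) = A+B-n := by ring
  have harg3 : A+B+1-(n:ℝ) = (A+B-(n:ℝ))+1 := by ring
  rw [harg1, harg2, harg3]
  have e1 : B * ffall A (n-k) + A * ffall (A-1) (n-k) = ((A+B-(n:ℝ))+k) * ffall A (n-k) := by
    have := ffall_bracket A B (n-k)
    have hc : ((n-k:ℕ):ℝ) = (n:ℝ) - k := by push_cast [Nat.cast_sub hk']; ring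
    rw [hc] at this
    rw [this]; ring
  have e2 : ((A+B-(n:ℝ))+k) * poch (A+B-(n:ℝ)) k = (A+B-(n:ℝ)) * poch ((A+B-(n:ℝ))+1) k :=
    poch_mul_add _ k
  linear_combination (↑(n.choose k) * poch (A+B-(n:ℝ)) k * ((x-1)^k * 2^(n-k))) * e1
    + (↑(n.choose k) * ffall A (n-k) * ((x-1)^k * 2^(n-k))) * e2

lemma LL_eq_RR (x : ℝ) (n : ℕ) : ∀ A B : ℝ, LLsum x A B n = RRsum x A B n := by
  induction n with
  | zero => intro A B; simp [LLsum, RRsum, ffall_zero, poch_zero]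
  | succ n ih =>
    intro A B
    rw [LL_rec, RR_rec, ih, ih]
    rw [show (A+B-(n:ℝ))*(x-1)*RRsum x A B n = (x-1)*((A+B-(n:ℝ))*RRsum x A B n) from by ring,
      ← RR_contig]
    ring

lemma monicJacobi_eq (α β X : ℝ) (n : ℕ) :
    monicJacobi α β n X
      = (∑ k ∈ Finset.range (n+1), (n.choose k : ℝ) * poch ((n:ℝ)+α+β+1) k
          * poch (α+(k:ℝ)+1) (n-k) * (X-1)^k * 2^(n-k)) / poch ((n:ℝ)+α+β+1) n := by
  have hfac : (Nat.factorial n : ℝ) ≠ 0 := Nat.cast_ne_zero.mpr (Nat.factorial_ne_zero n)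
  have hS : (∑ k ∈ Finset.range (n+1),
      (poch ((n:ℝ) + α - (k:ℝ) + 1) k / (Nat.factorial k : ℝ)) * (poch (β + (k:ℝ) + 1) (n - k) / (Nat.factorial (n-k) : ℝ))
        * (X - 1) ^ (n - k) * (X + 1) ^ k) * (Nat.factorial n : ℝ)
      = LLsum X ((n:ℝ)+α) ((n:ℝ)+β) n := by
    rw [LLsum, Finset.sum_mul]
    apply Finset.sum_congr rfl
    intro k hk
    rw [Finset.mem_range] at hk; have hk' : k ≤ n := by omega
    rw [← poch_eq_ffall ((n:ℝ)+α) k, ← poch_shift_eq_ffall β n k hk']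
    have hk0 : (Nat.factorial k : ℝ) ≠ 0 := Nat.cast_ne_zero.mpr (Nat.factorial_ne_zero k)
    have hnk0 : (Nat.factorial (n-k) : ℝ) ≠ 0 := Nat.cast_ne_zero.mpr (Nat.factorial_ne_zero (n-k))
    rw [Nat.cast_choose ℝ hk']
    field_simp
  rw [monicJacobi]
  rw [show ((Nat.factorial n : ℝ) / poch ((n:ℝ) + α + β + 1) n) *
      (∑ k ∈ Finset.range (n+1),
      (poch ((n:ℝ) + α - (k:ℝ) + 1) k / (Nat.factorial k : ℝ)) * (poch (β + (k:ℝ) + 1) (n - k) / (Nat.factorial (n-k) : ℝ))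
        * (X - 1) ^ (n - k) * (X + 1) ^ k)
      = ((∑ k ∈ Finset.range (n+1),
      (poch ((n:ℝ) + α - (k:ℝ) + 1) k / (Nat.factorial k : ℝ)) * (poch (β + (k:ℝ) + 1) (n - k) / (Nat.factorial (n-k) : ℝ))
        * (X - 1) ^ (n - k) * (X + 1) ^ k) * (Nat.factorial n : ℝ)) / poch ((n:ℝ) + α + β + 1) n
    from by ring]
  rw [hS, LL_eq_RR]
  congr 1
  rw [RRsum]
  apply Finset.sum_congr rfl
  intro k hk
  rw [Finset.mem_range] at hk; have hk' : k ≤ n := by omega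
  rw [show ((n:ℝ)+α)+((n:ℝ)+β)+1-(n:ℝ) = (n:ℝ)+α+β+1 from by ring,
    ← poch_shift_eq_ffall α n k hk']

/-! ### Discrete differences -/

noncomputable def dd (f : ℕ → ℝ) : ℕ → ℝ := fun r => f (r+1) - f r

lemma dd_iter_succ (f : ℕ → ℝ) (j r : ℕ) :
    dd^[j+1] f r = dd^[j] f (r+1) - dd^[j] f r := by
  rw [Function.iterate_succ_apply']; rfl

lemma dd_add (f g : ℕ → ℝ) (j : ℕ) : ∀ r, dd^[j] (fun r => f r + g r) r = dd^[j] f r + dd^[j] g r := by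
  induction j generalizing f g with
  | zero => intro r; simp
  | succ j ih =>
    intro r
    rw [Function.iterate_succ_apply, Function.iterate_succ_apply (f := dd) (n := j) (x := f),
      Function.iterate_succ_apply (f := dd) (n := j) (x := g)]
    rw [show dd (fun r => f r + g r) = fun r => dd f r + dd g r from by funext r; simp only [dd]; ring]
    exact ih (dd f) (dd g) r

lemma dd_const_mul (c : ℝ) (f : ℕ → ℝ) (j : ℕ) : ∀ r, dd^[j] (fun r => c * f r) r = c * dd^[j] f r := by
  induction j generalizing f with
  | zero => intro r; simp
  | succ j ih =>
    intro r
    rw [Function.iterate_succ_apply, Function.iterate_succ_apply (f := dd) (n := j) (x := f)]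
    rw [show dd (fun r => c * f r) = fun r => c * dd f r from by funext r; simp only [dd]; ring]
    exact ih (dd f) r

lemma dd_sub (f g : ℕ → ℝ) (j r : ℕ) : dd^[j] (fun r => f r - g r) r = dd^[j] f r - dd^[j] g r := by
  have h1 : (fun r => f r - g r) = fun r => f r + (-1:ℝ) * g r := by funext r; ring
  rw [h1, dd_add f (fun r => (-1:ℝ)*g r), dd_const_mul]
  ring

lemma dd_shift (f : ℕ → ℝ) (j : ℕ) : ∀ r, dd^[j] (fun r => f (r+1)) r = dd^[j] f (r+1) := by
  induction j generalizing f with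
  | zero => intro r; simp
  | succ j ih =>
    intro r
    rw [Function.iterate_succ_apply, Function.iterate_succ_apply (f := dd) (n := j) (x := f)]
    rw [show dd (fun r => f (r+1)) = fun r => dd f (r+1) from by funext r; simp [dd]]
    exact ih (dd f) r

lemma dd_shift_c (f : ℕ → ℝ) (c j r : ℕ) : dd^[j] (fun r => f (r+c)) r = dd^[j] f (r+c) := by
  induction c generalizing f r with
  | zero => simp
  | succ c ih =>
    calc dd^[j] (fun r => f (r+(c+1))) r = dd^[j] (fun r => (fun r' => f (r'+1)) (r+c)) r := rfl
    _ = dd^[j] (fun r' => f (r'+1)) (r+c) := ih (fun r' => f (r'+1)) r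
    _ = dd^[j] f (r+c+1) := dd_shift f j (r+c)
    _ = dd^[j] f (r+(c+1)) := rfl

lemma dd_zero_fun (j : ℕ) : ∀ r, dd^[j] (fun _ => (0:ℝ)) r = 0 := by
  induction j with
  | zero => intro r; simp
  | succ j ih =>
    intro r
    rw [Function.iterate_succ_apply, show dd (fun _ => (0:ℝ)) = fun _ => (0:ℝ) from by funext r; simp [dd]]
    exact ih r

lemma dd_const (c : ℝ) (j r : ℕ) : dd^[j+1] (fun _ => c) r = 0 := by
  rw [Function.iterate_succ_apply, show dd (fun _ => c) = fun _ => (0:ℝ) from by funext r; simp [dd]]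
  exact dd_zero_fun j r

lemma dd_leibniz (f g : ℕ → ℝ) (j : ℕ) : ∀ r, dd^[j] (fun r => f r * g r) r
    = ∑ i ∈ Finset.range (j+1), (j.choose i : ℝ) * dd^[i] f r * dd^[j-i] g (r+i) := by
  induction j generalizing f g with
  | zero => intro r; simp
  | succ j ih =>
    intro r
    have hmain : dd^[j+1] (fun r => f r * g r) r
        = dd^[j] (fun r => dd f r * g (r+1)) r + dd^[j] (fun r => f r * dd g r) r := by
      rw [Function.iterate_succ_apply,
        show dd (fun r => f r * g r) = fun r => dd f r * g (r+1) + f r * dd g r from by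
          funext r; simp [dd]; ring,
        dd_add]
    rw [hmain, ih (dd f) (fun r => g (r+1)), ih f (dd g)]
    have h1 : ∑ i ∈ Finset.range (j+1), (j.choose i : ℝ) * dd^[i] (dd f) r * dd^[j-i] (fun r => g (r+1)) (r+i)
        = ∑ i ∈ Finset.range (j+1), (j.choose i : ℝ) * (dd^[i+1] f r * dd^[j+1-(i+1)] g (r+(i+1))) := by
      apply Finset.sum_congr rfl
      intro i hi
      rw [Finset.mem_range] at hi
      rw [dd_shift, ← Function.iterate_succ_apply (f := dd)]
      simp only [Nat.succ_eq_add_one]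
      have : j + 1 - (i+1) = j - i := by omega
      rw [this]
      have : r + i + 1 = r + (i+1) := by omega
      rw [this]
      ring
    have h2 : ∑ i ∈ Finset.range (j+1), (j.choose i : ℝ) * dd^[i] f r * dd^[j-i] (dd g) (r+i)
        = ∑ i ∈ Finset.range (j+1), (j.choose i : ℝ) * (dd^[i] f r * dd^[j+1-i] g (r+i)) := by
      apply Finset.sum_congr rfl
      intro i hi
      rw [Finset.mem_range] at hi
      rw [← Function.iterate_succ_apply (f := dd)]
      simp only [Nat.succ_eq_add_one]
      have : j - i + 1 = j + 1 - i := by omega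
      rw [this]
      ring
    rw [h1, h2]
    have h3 : ∑ i ∈ Finset.range (j+1+1), ((j+1).choose i : ℝ) * dd^[i] f r * dd^[j+1-i] g (r+i)
        = ∑ i ∈ Finset.range (j+2), ((j+1).choose i : ℝ) * (dd^[i] f r * dd^[j+1-i] g (r+i)) :=
      Finset.sum_congr rfl (by intros; ring)
    rw [h3, sum_choose_succ (fun i => dd^[i] f r * dd^[j+1-i] g (r+i)) j]
    ring

/-! ### The key alternating sum -/

noncomputable def TT (q : ℕ → ℝ) (Z : ℝ) (N r : ℕ) : ℝ :=
  ∑ k ∈ Finset.range (N+1), (-1:ℝ)^k * (N.choose k : ℝ) * Z^k * ∏ m ∈ Finset.Ico (k+1) (N+1), q (m+r)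

lemma TT_zero (q : ℕ → ℝ) (Z : ℝ) (r : ℕ) : TT q Z 0 r = 1 := by simp [TT]

lemma TT_succ (q : ℕ → ℝ) (Z : ℝ) (N r : ℕ) :
    TT q Z (N+1) r = q (N+1+r) * TT q Z N r - Z * TT q Z N (r+1) := by
  rw [TT]
  rw [show ∑ k ∈ Finset.range (N+2), (-1:ℝ)^k * ((N+1).choose k : ℝ) * Z^k * ∏ m ∈ Finset.Ico (k+1) (N+2), q (m+r)
      = ∑ k ∈ Finset.range (N+2), ((N+1).choose k : ℝ) * ((-1:ℝ)^k * Z^k * ∏ m ∈ Finset.Ico (k+1) (N+2), q (m+r)) from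
    Finset.sum_congr rfl (by intros; ring)]
  rw [sum_choose_succ (fun k => (-1:ℝ)^k * Z^k * ∏ m ∈ Finset.Ico (k+1) (N+2), q (m+r)) N]
  congr 1
  · rw [TT, Finset.mul_sum]
    apply Finset.sum_congr rfl
    intro k hk
    rw [Finset.mem_range] at hk
    rw [Finset.prod_Ico_succ_top (by omega : k+1 ≤ N+1)]
    ring
  · rw [TT, Finset.mul_sum, ← Finset.sum_neg_distrib]
    apply Finset.sum_congr rfl
    intro k hk
    rw [Finset.mem_range] at hk
    have hprod : ∏ m ∈ Finset.Ico (k+1+1) (N+2), q (m+r) = ∏ m ∈ Finset.Ico (k+1) (N+1), q (m+(r+1)) := by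
      rw [Finset.prod_Ico_eq_prod_range, Finset.prod_Ico_eq_prod_range]
      have : N+2-(k+1+1) = N+1-(k+1) := by omega
      rw [this]
      apply Finset.prod_congr rfl
      intro i _
      congr 1
      omega
    rw [hprod, pow_succ, pow_succ]
    ring

/-! ### The concrete quantities -/

noncomputable def uu (s t : ℝ) : ℝ := s*t/(s+t)
noncomputable def vv (s t : ℝ) : ℝ := s/Real.sqrt (s+t)
noncomputable def ZZ (x s t : ℝ) : ℝ := 1 - x * vv s t/2
noncomputable def qq (n : ℕ) (s t : ℝ) (m : ℕ) : ℝ := (1+s*(m:ℝ))/(1+ uu s t*((n:ℝ)+(m:ℝ)))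

lemma uu_pos {s t : ℝ} (hs : 0 < s) (ht : 0 < t) : 0 < uu s t := by
  unfold uu; positivity

lemma one_add_uu_pos {s t : ℝ} (hs : 0 < s) (ht : 0 < t) {c : ℝ} (hc : 0 ≤ c) :
    0 < 1 + uu s t * c := by
  have := uu_pos hs ht
  nlinarith

lemma prod_one_add_uu_pos {s t : ℝ} (hs : 0 < s) (ht : 0 < t) (n m j : ℕ) :
    0 < ∏ l ∈ Finset.range j, (1 + uu s t * ((n:ℝ)+(m:ℝ)+(l:ℝ))) := by
  apply Finset.prod_pos
  intro l _
  exact one_add_uu_pos hs ht (by positivity)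

lemma dd_qq_mul (n : ℕ) {s t : ℝ} (hs : 0 < s) (ht : 0 < t) (i : ℕ) : ∀ m : ℕ,
    dd^[i+1] (qq n s t) m * ∏ l ∈ Finset.range (i+2), (1 + uu s t*((n:ℝ)+(m:ℝ)+(l:ℝ)))
      = (-1:ℝ)^i * ((i+1).factorial : ℝ) * (s^2*(1+t*(n:ℝ))/(s+t)) * (uu s t)^i := by
  induction i with
  | zero =>
    intro m
    have hst : s + t ≠ 0 := by positivity
    have h1 : (1:ℝ) + uu s t * ((n:ℝ)+(m:ℝ)) ≠ 0 := ne_of_gt (one_add_uu_pos hs ht (by positivity))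
    have h2 : (1:ℝ) + uu s t * ((n:ℝ)+(m:ℝ)+1) ≠ 0 := ne_of_gt (one_add_uu_pos hs ht (by positivity))
    have hit : dd^[1] (qq n s t) m = qq n s t (m+1) - qq n s t m := by
      rw [Function.iterate_one]; rfl
    rw [hit]
    rw [Finset.prod_range_succ, Finset.prod_range_one]
    unfold qq
    push_cast
    rw [show (n:ℝ)+((m:ℝ)+1) = (n:ℝ)+(m:ℝ)+1 from by ring, show (n:ℝ)+(m:ℝ)+0 = (n:ℝ)+(m:ℝ) from by ring]
    unfold uu at *
    field_simp
    ring
  | succ i ih =>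
    intro m
    set u := uu s t with hu
    have hupos : 0 < u := uu_pos hs ht
    set f : ℕ → ℝ := fun l => 1 + u * ((n:ℝ)+(m:ℝ)+(l:ℝ)) with hf
    have hP2 : (0:ℝ) < ∏ l ∈ Finset.range (i+2), (1 + u*((n:ℝ)+(m:ℝ)+(l:ℝ))) :=
      prod_one_add_uu_pos hs ht n m (i+2)
    have hP2' : (0:ℝ) < ∏ l ∈ Finset.range (i+2), (1 + u*((n:ℝ)+((m+1:ℕ):ℝ)+(l:ℝ))) := by
      push_cast
      have := prod_one_add_uu_pos hs ht n (m+1) (i+2)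
      push_cast at this
      convert this using 2 with l
    have hP3a : ∏ l ∈ Finset.range (i+3), (1 + u*((n:ℝ)+(m:ℝ)+(l:ℝ)))
        = (1 + u*((n:ℝ)+(m:ℝ))) * ∏ l ∈ Finset.range (i+2), (1 + u*((n:ℝ)+((m+1:ℕ):ℝ)+(l:ℝ))) := by
      rw [Finset.prod_range_succ' (fun l => 1 + u*((n:ℝ)+(m:ℝ)+(l:ℝ))) (i+2)]
      rw [mul_comm]
      congr 1
      · push_cast; ring_nf
      · apply Finset.prod_congr rfl
        intro l _
        push_cast; ring_nf
    have hP3b : ∏ l ∈ Finset.range (i+3), (1 + u*((n:ℝ)+(m:ℝ)+(l:ℝ)))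
        = (∏ l ∈ Finset.range (i+2), (1 + u*((n:ℝ)+(m:ℝ)+(l:ℝ)))) * (1 + u*((n:ℝ)+(m:ℝ)+((i:ℝ)+2))) := by
      rw [Finset.prod_range_succ]
      congr 2
      push_cast; ring
    have ihm := ih m
    have ihm1 := ih (m+1)
    have hit : dd^[i+1+1] (qq n s t) m = dd^[i+1] (qq n s t) (m+1) - dd^[i+1] (qq n s t) m :=
      dd_iter_succ _ _ _
    rw [hit, sub_mul]
    rw [show (i+1)+2 = i+3 from by omega] at *
    nth_rewrite 1 [hP3a]
    nth_rewrite 1 [hP3b]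
    rw [show ((i+1+1).factorial : ℝ) = ((i:ℝ)+2)*((i+1).factorial : ℝ) from by
      rw [Nat.factorial_succ]; push_cast; ring]
    rw [pow_succ (-1:ℝ) i, pow_succ u i]
    linear_combination (1 + u*((n:ℝ)+(m:ℝ)))*ihm1 - (1 + u*((n:ℝ)+(m:ℝ)+((i:ℝ)+2)))*ihm

lemma dd_qq_eq (n : ℕ) {s t : ℝ} (hs : 0 < s) (ht : 0 < t) (i m : ℕ) :
    dd^[i+1] (qq n s t) m
      = (-1:ℝ)^i * ((i+1).factorial : ℝ) * (s^2*(1+t*(n:ℝ))/(s+t)) * (uu s t)^i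
        / ∏ l ∈ Finset.range (i+2), (1 + uu s t*((n:ℝ)+(m:ℝ)+(l:ℝ))) := by
  have h := dd_qq_mul n hs ht i m
  have hP : (0:ℝ) < ∏ l ∈ Finset.range (i+2), (1 + uu s t*((n:ℝ)+(m:ℝ)+(l:ℝ))) :=
    prod_one_add_uu_pos hs ht n m (i+2)
  rw [eq_div_iff (ne_of_gt hP)]
  exact h

/-! ### Filter lemmas -/

abbrev Lfil : Filter (ℝ×ℝ) := nhdsWithin ((0 : ℝ), (0 : ℝ)) (Set.Ioi 0 ×ˢ Set.Ioi 0)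

lemma ev_pos : ∀ᶠ p : ℝ×ℝ in Lfil, 0 < p.1 ∧ 0 < p.2 := by
  filter_upwards [self_mem_nhdsWithin] with p hp
  rw [Set.mem_prod] at hp
  exact ⟨hp.1, hp.2⟩

lemma tendsto_fst0 : Filter.Tendsto (fun p : ℝ×ℝ => p.1) Lfil (nhds 0) :=
  (continuous_fst.tendsto ((0:ℝ),(0:ℝ))).mono_left nhdsWithin_le_nhds

lemma tendsto_snd0 : Filter.Tendsto (fun p : ℝ×ℝ => p.2) Lfil (nhds 0) :=
  (continuous_snd.tendsto ((0:ℝ),(0:ℝ))).mono_left nhdsWithin_le_nhds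

lemma tendsto_sum0 : Filter.Tendsto (fun p : ℝ×ℝ => p.1+p.2) Lfil (nhds 0) := by
  have := tendsto_fst0.add tendsto_snd0
  simpa using this

lemma tendsto_W0 : Filter.Tendsto (fun p : ℝ×ℝ => Real.sqrt (p.1+p.2)) Lfil (nhds 0) := by
  have h := (Real.continuous_sqrt.tendsto 0).comp tendsto_sum0
  simpa [Function.comp_def] using h

lemma tendsto_sqrt_fst0 : Filter.Tendsto (fun p : ℝ×ℝ => Real.sqrt p.1) Lfil (nhds 0) := by
  have h := (Real.continuous_sqrt.tendsto 0).comp tendsto_fst0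
  simpa [Function.comp_def] using h

lemma tendsto_sqrt_snd0 : Filter.Tendsto (fun p : ℝ×ℝ => Real.sqrt p.2) Lfil (nhds 0) := by
  have h := (Real.continuous_sqrt.tendsto 0).comp tendsto_snd0
  simpa [Function.comp_def] using h

lemma vv_pos {s t : ℝ} (hs : 0 < s) (ht : 0 < t) : 0 < vv s t := by
  unfold vv
  have : 0 < Real.sqrt (s+t) := Real.sqrt_pos.mpr (by linarith)
  positivity

lemma tendsto_vv0 : Filter.Tendsto (fun p : ℝ×ℝ => vv p.1 p.2) Lfil (nhds 0) := by
  apply squeeze_zero' (g := fun p : ℝ×ℝ => Real.sqrt p.1)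
  · filter_upwards [ev_pos] with p hp
    exact le_of_lt (vv_pos hp.1 hp.2)
  · filter_upwards [ev_pos] with p hp
    unfold vv
    have h1 : 0 < Real.sqrt (p.1+p.2) := Real.sqrt_pos.mpr (by linarith [hp.1, hp.2])
    rw [div_le_iff₀ h1]
    calc p.1 = Real.sqrt p.1 * Real.sqrt p.1 := (Real.mul_self_sqrt hp.1.le).symm
    _ ≤ Real.sqrt p.1 * Real.sqrt (p.1+p.2) := by
        apply mul_le_mul_of_nonneg_left (Real.sqrt_le_sqrt (by linarith [hp.2])) (Real.sqrt_nonneg _)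
  · exact tendsto_sqrt_fst0

lemma tendsto_tW0 : Filter.Tendsto (fun p : ℝ×ℝ => p.2/Real.sqrt (p.1+p.2)) Lfil (nhds 0) := by
  apply squeeze_zero' (g := fun p : ℝ×ℝ => Real.sqrt p.2)
  · filter_upwards [ev_pos] with p hp
    have h1 : 0 < Real.sqrt (p.1+p.2) := Real.sqrt_pos.mpr (by linarith [hp.1, hp.2])
    exact div_nonneg hp.2.le h1.le
  · filter_upwards [ev_pos] with p hp
    have h1 : 0 < Real.sqrt (p.1+p.2) := Real.sqrt_pos.mpr (by linarith [hp.1, hp.2])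
    rw [div_le_iff₀ h1]
    calc p.2 = Real.sqrt p.2 * Real.sqrt p.2 := (Real.mul_self_sqrt hp.2.le).symm
    _ ≤ Real.sqrt p.2 * Real.sqrt (p.1+p.2) := by
        apply mul_le_mul_of_nonneg_left (Real.sqrt_le_sqrt (by linarith [hp.1])) (Real.sqrt_nonneg _)
  · exact tendsto_sqrt_snd0

lemma tendsto_uu0 : Filter.Tendsto (fun p : ℝ×ℝ => uu p.1 p.2) Lfil (nhds 0) := by
  apply squeeze_zero' (g := fun p : ℝ×ℝ => p.1)
  · filter_upwards [ev_pos] with p hp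
    exact (uu_pos hp.1 hp.2).le
  · filter_upwards [ev_pos] with p hp
    unfold uu
    rw [div_le_iff₀ (by linarith [hp.1, hp.2])]
    nlinarith [hp.1, hp.2]
  · exact tendsto_fst0

lemma tendsto_ZZ1 (x : ℝ) : Filter.Tendsto (fun p : ℝ×ℝ => ZZ x p.1 p.2) Lfil (nhds 1) := by
  unfold ZZ
  have h := ((tendsto_vv0.const_mul x).div_const 2).const_sub 1
  simpa using h

lemma tendsto_one_add_uu (c : ℝ) :
    Filter.Tendsto (fun p : ℝ×ℝ => 1 + uu p.1 p.2 * c) Lfil (nhds 1) := by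
  have h := (tendsto_uu0.mul_const c).const_add 1
  simpa using h

lemma tendsto_qq1 (n m : ℕ) : Filter.Tendsto (fun p : ℝ×ℝ => qq n p.1 p.2 m) Lfil (nhds 1) := by
  unfold qq
  have h1 : Filter.Tendsto (fun p : ℝ×ℝ => 1 + p.1 * (m:ℝ)) Lfil (nhds 1) := by
    have := (tendsto_fst0.mul_const (m:ℝ)).const_add 1
    simpa using this
  have h2 := tendsto_one_add_uu ((n:ℝ)+(m:ℝ))
  have := h1.div h2 one_ne_zero
  simpa [Pi.div_def] using this

lemma tendsto_prod_uu1 (n m j : ℕ) :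
    Filter.Tendsto (fun p : ℝ×ℝ => ∏ l ∈ Finset.range j, (1 + uu p.1 p.2 * ((n:ℝ)+(m:ℝ)+(l:ℝ)))) Lfil (nhds 1) := by
  have h : Filter.Tendsto (fun p : ℝ×ℝ => ∏ l ∈ Finset.range j, (1 + uu p.1 p.2 * ((n:ℝ)+(m:ℝ)+(l:ℝ)))) Lfil
      (nhds (∏ l ∈ Finset.range j, (1:ℝ))) := by
    apply tendsto_finset_prod
    intro l _
    exact tendsto_one_add_uu _
  simpa using h

/-! ### Ratio limits -/

lemma tendsto_qZ (n m : ℕ) (x : ℝ) :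
    Filter.Tendsto (fun p : ℝ×ℝ => (qq n p.1 p.2 m - ZZ x p.1 p.2)/vv p.1 p.2) Lfil (nhds (x/2)) := by
  have hE : Filter.Tendsto (fun p : ℝ×ℝ =>
      x/2 + (Real.sqrt (p.1+p.2)*(m:ℝ) - (p.2/Real.sqrt (p.1+p.2))*((n:ℝ)+(m:ℝ)))
        /(1 + uu p.1 p.2*((n:ℝ)+(m:ℝ)))) Lfil (nhds (x/2)) := by
    have hnum : Filter.Tendsto (fun p : ℝ×ℝ =>
        Real.sqrt (p.1+p.2)*(m:ℝ) - (p.2/Real.sqrt (p.1+p.2))*((n:ℝ)+(m:ℝ))) Lfil (nhds 0) := by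
      have := (tendsto_W0.mul_const (m:ℝ)).sub (tendsto_tW0.mul_const ((n:ℝ)+(m:ℝ)))
      simpa using this
    have h := (hnum.div (tendsto_one_add_uu ((n:ℝ)+(m:ℝ))) one_ne_zero).const_add (x/2)
    simpa using h
  apply hE.congr'
  filter_upwards [ev_pos] with p hp
  obtain ⟨hs, ht⟩ := hp
  have hW : 0 < Real.sqrt (p.1+p.2) := Real.sqrt_pos.mpr (by linarith)
  have hW2 : Real.sqrt (p.1+p.2)^2 = p.1+p.2 := Real.sq_sqrt (by linarith)
  have hden : (0:ℝ) < 1 + uu p.1 p.2*((n:ℝ)+(m:ℝ)) := one_add_uu_pos hs ht (by positivity)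
  unfold qq ZZ vv uu at *
  set W := Real.sqrt (p.1+p.2) with hWdef
  rw [← hW2] at hden ⊢
  field_simp
  ring

lemma tendsto_ddq1 (n m : ℕ) :
    Filter.Tendsto (fun p : ℝ×ℝ => dd (qq n p.1 p.2) m / vv p.1 p.2^2) Lfil (nhds 1) := by
  have hE : Filter.Tendsto (fun p : ℝ×ℝ =>
      (1+p.2*(n:ℝ)) / ∏ l ∈ Finset.range 2, (1 + uu p.1 p.2*((n:ℝ)+(m:ℝ)+(l:ℝ)))) Lfil (nhds 1) := by
    have hnum : Filter.Tendsto (fun p : ℝ×ℝ => 1+p.2*(n:ℝ)) Lfil (nhds 1) := by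
      have := (tendsto_snd0.mul_const (n:ℝ)).const_add 1
      simpa using this
    have h := hnum.div (tendsto_prod_uu1 n m 2) one_ne_zero
    simpa [Pi.div_def] using h
  apply hE.congr'
  filter_upwards [ev_pos] with p hp
  obtain ⟨hs, ht⟩ := hp
  have hW : 0 < Real.sqrt (p.1+p.2) := Real.sqrt_pos.mpr (by linarith)
  have hW2 : Real.sqrt (p.1+p.2)^2 = p.1+p.2 := Real.sq_sqrt (by linarith)
  have hP : (0:ℝ) < ∏ l ∈ Finset.range 2, (1 + uu p.1 p.2*((n:ℝ)+(m:ℝ)+(l:ℝ))) :=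
    prod_one_add_uu_pos hs ht n m 2
  have hq := dd_qq_eq n hs ht 0 m
  rw [Function.iterate_one] at hq
  rw [hq]
  simp only [pow_zero, Nat.factorial_one]
  unfold uu vv at *
  set W := Real.sqrt (p.1+p.2) with hWdef
  set P := ∏ l ∈ Finset.range 2, (1 + p.1*p.2/(p.1+p.2)*((n:ℝ)+(m:ℝ)+(l:ℝ))) with hPdef
  rw [← hW2]
  field_simp
  ring

lemma tendsto_ddqi (n m i : ℕ) :
    Filter.Tendsto (fun p : ℝ×ℝ => dd^[i+1+1] (qq n p.1 p.2) m / vv p.1 p.2^(i+1+2)) Lfil (nhds 0) := by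
  have hE : Filter.Tendsto (fun p : ℝ×ℝ =>
      (-1:ℝ)^(i+1) * ((i+1+1).factorial : ℝ) * (1+p.2*(n:ℝ)) * (p.2/Real.sqrt (p.1+p.2))^(i+1)
        / ∏ l ∈ Finset.range (i+1+2), (1 + uu p.1 p.2*((n:ℝ)+(m:ℝ)+(l:ℝ)))) Lfil (nhds 0) := by
    have h1 : Filter.Tendsto (fun p : ℝ×ℝ => 1+p.2*(n:ℝ)) Lfil (nhds 1) := by
      have := (tendsto_snd0.mul_const (n:ℝ)).const_add 1
      simpa using this
    have h2 : Filter.Tendsto (fun p : ℝ×ℝ => (p.2/Real.sqrt (p.1+p.2))^(i+1)) Lfil (nhds 0) := by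
      have := tendsto_tW0.pow (i+1)
      simpa [zero_pow (Nat.succ_ne_zero i)] using this
    have hnum := ((h1.const_mul ((-1:ℝ)^(i+1) * ((i+1+1).factorial : ℝ))).mul h2)
    have h := hnum.div (tendsto_prod_uu1 n m (i+1+2)) one_ne_zero
    simp only [mul_one, mul_zero, zero_div] at h
    exact h
  apply hE.congr'
  filter_upwards [ev_pos] with p hp
  obtain ⟨hs, ht⟩ := hp
  have hW : 0 < Real.sqrt (p.1+p.2) := Real.sqrt_pos.mpr (by linarith)
  have hW2 : Real.sqrt (p.1+p.2)^2 = p.1+p.2 := Real.sq_sqrt (by linarith)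
  have hP : (0:ℝ) < ∏ l ∈ Finset.range (i+1+2), (1 + uu p.1 p.2*((n:ℝ)+(m:ℝ)+(l:ℝ))) :=
    prod_one_add_uu_pos hs ht n m (i+1+2)
  have hq := dd_qq_eq n hs ht (i+1) m
  rw [hq]
  unfold uu vv at *
  set W := Real.sqrt (p.1+p.2) with hWdef
  set P := ∏ l ∈ Finset.range (i+1+2), (1 + p.1*p.2/(p.1+p.2)*((n:ℝ)+(m:ℝ)+(l:ℝ))) with hPdef
  rw [← hW2]
  have hWne : W ≠ 0 := ne_of_gt hW
  field_simp
  simp only [div_pow]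
  field_simp
  ring

/-! ### Hermite recurrence -/

lemma monicHermite_zero (y : ℝ) : monicHermite 0 y = 1 := by
  norm_num [monicHermite]

lemma monicHermite_one (y : ℝ) : monicHermite 1 y = y := by
  norm_num [monicHermite]

noncomputable def FH (y : ℝ) (n m : ℕ) : ℝ :=
  (-1 : ℝ) ^ m * y ^ (n - 2 * m) / (4 ^ m * (m.factorial : ℝ) * ((n - 2 * m).factorial : ℝ))

noncomputable def GH (y : ℝ) (N m : ℕ) : ℝ :=
  (-1 : ℝ) ^ m * y ^ (N + 2 - 2 * m) * ((N+1).factorial : ℝ) * (2 * (m:ℝ))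
    / (4 ^ m * (m.factorial : ℝ) * ((N + 2 - 2 * m).factorial : ℝ))

lemma monicHermite_FH (n : ℕ) (y : ℝ) :
    monicHermite n y = (n.factorial : ℝ) * ∑ m ∈ Finset.range (n / 2 + 1), FH y n m := by
  rfl

lemma GH_zero (y : ℝ) (N : ℕ) : GH y N 0 = 0 := by
  simp [GH]

lemma hstep1 (y : ℝ) (N m : ℕ) (hm : 2*m ≤ N+1) :
    ((N+2).factorial : ℝ) * FH y (N+2) m - ((N+1).factorial : ℝ) * y * FH y (N+1) m
      = GH y N m := by
  unfold FH GH
  have ha : N + 2 - 2*m = (N+1-2*m)+1 := by omega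
  rw [ha, pow_succ]
  have hfs : ((((N+1-2*m)+1):ℕ).factorial : ℝ) = ((N:ℝ)+2-2*m) * (((N+1-2*m):ℕ).factorial : ℝ) := by
    rw [Nat.factorial_succ]
    push_cast [Nat.cast_sub (show 2*m ≤ N+1 by omega)]
    ring
  rw [hfs]
  have hf1 : ((N+2).factorial : ℝ) = ((N:ℝ)+2) * ((N+1).factorial : ℝ) := by
    rw [show N+2 = (N+1)+1 from rfl, Nat.factorial_succ]; push_cast; ring
  rw [hf1]
  have h2 : ((N+1-2*m).factorial : ℝ) ≠ 0 := Nat.cast_ne_zero.mpr (Nat.factorial_ne_zero _)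
  have h3 : ((m).factorial : ℝ) ≠ 0 := Nat.cast_ne_zero.mpr (Nat.factorial_ne_zero _)
  have h4 : ((N:ℝ)+2-2*m) ≠ 0 := by
    have : (2*(m:ℝ)) ≤ (N:ℝ)+1 := by exact_mod_cast hm
    nlinarith
  have h5 : (4:ℝ)^m ≠ 0 := by positivity
  have hnk1 : N+1-2*m = N+2-2*m-1 := by omega
  field_simp
  ring

lemma hstep2 (y : ℝ) (N m : ℕ) (hm : 2*m ≤ N) :
    GH y N (m+1) = -(((N:ℝ)+1)/2) * ((N).factorial : ℝ) * FH y N m := by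
  unfold FH GH
  have ha : N + 2 - 2*(m+1) = N - 2*m := by omega
  rw [ha, pow_succ (-1:ℝ) m, pow_succ (4:ℝ) m]
  have hfm : (((m+1):ℕ).factorial : ℝ) = ((m:ℝ)+1) * ((m).factorial : ℝ) := by
    rw [Nat.factorial_succ]; push_cast; ring
  have hfN : (((N+1):ℕ).factorial : ℝ) = ((N:ℝ)+1) * ((N).factorial : ℝ) := by
    rw [Nat.factorial_succ]; push_cast; ring
  rw [hfm, hfN]
  have h2 : ((N-2*m).factorial : ℝ) ≠ 0 := Nat.cast_ne_zero.mpr (Nat.factorial_ne_zero _)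
  have h3 : ((m).factorial : ℝ) ≠ 0 := Nat.cast_ne_zero.mpr (Nat.factorial_ne_zero _)
  have h5 : (4:ℝ)^m ≠ 0 := by positivity
  field_simp
  push_cast
  ring

lemma monicHermite_rec (N : ℕ) (y : ℝ) :
    monicHermite (N+2) y = y * monicHermite (N+1) y - (((N:ℝ)+1)/2) * monicHermite N y := by
  rw [monicHermite_FH, monicHermite_FH, monicHermite_FH]
  rcases Nat.even_or_odd N with ⟨K, hK⟩ | ⟨K, hK⟩
  · -- even case N = K+K
    subst hK
    have hr2 : (K+K+2)/2 + 1 = K+2 := by omega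
    have hr1 : (K+K+1)/2 + 1 = K+1 := by omega
    have hr0 : (K+K)/2 + 1 = K+1 := by omega
    rw [hr2, hr1, hr0]
    rw [Finset.sum_range_succ (FH y (K+K+2)) (K+1), Finset.sum_range_succ (FH y (K+K)) K]
    have e1 : ∑ m ∈ Finset.range (K+1), (((K+K+2).factorial : ℝ) * FH y (K+K+2) m
        - ((K+K+1).factorial : ℝ) * y * FH y (K+K+1) m) = ∑ m ∈ Finset.range (K+1), GH y (K+K) m :=
      Finset.sum_congr rfl (fun m hm => hstep1 y (K+K) m (by
        rw [Finset.mem_range] at hm; omega))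
    have e1' : ((K+K+2).factorial : ℝ) * (∑ m ∈ Finset.range (K+1), FH y (K+K+2) m)
        - ((K+K+1).factorial : ℝ) * y * (∑ m ∈ Finset.range (K+1), FH y (K+K+1) m)
        = ∑ m ∈ Finset.range (K+1), GH y (K+K) m := by
      rw [← e1, Finset.sum_sub_distrib, ← Finset.mul_sum, ← Finset.mul_sum]
    have e2 : ∑ m ∈ Finset.range (K+1), GH y (K+K) m = ∑ m ∈ Finset.range K, GH y (K+K) (m+1) := by
      rw [Finset.sum_range_succ' (GH y (K+K)) K, GH_zero, add_zero]
    have e3' : ∑ m ∈ Finset.range K, GH y (K+K) (m+1)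
        = -((((K+K):ℕ):ℝ)+1)/2 * ((K+K).factorial : ℝ) * (∑ m ∈ Finset.range K, FH y (K+K) m) := by
      rw [Finset.mul_sum]
      apply Finset.sum_congr rfl
      intro m hm
      rw [Finset.mem_range] at hm
      rw [hstep2 y (K+K) m (by omega)]
      ring
    have e4 : ((K+K+2).factorial : ℝ) * FH y (K+K+2) (K+1)
        = -((((K+K):ℕ):ℝ)+1)/2 * ((K+K).factorial : ℝ) * FH y (K+K) K := by
      unfold FH
      have ha : K+K+2 - 2*(K+1) = 0 := by omega
      have hb : K+K - 2*K = 0 := by omega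
      rw [ha, hb]
      simp only [pow_zero, Nat.factorial_zero, Nat.cast_one, mul_one]
      have hf2 : ((K+K+2).factorial : ℝ)
          = ((((K+K):ℕ):ℝ)+2) * ((((K+K):ℕ):ℝ)+1) * ((K+K).factorial : ℝ) := by
        rw [show K+K+2 = (K+K+1)+1 from rfl, Nat.factorial_succ, Nat.factorial_succ]
        push_cast; ring
      have hfK : ((K+1).factorial : ℝ) = ((K:ℝ)+1)*(K.factorial : ℝ) := by
        rw [Nat.factorial_succ]; push_cast; ring
      rw [hf2, hfK, pow_succ (4:ℝ) K, pow_succ (-1:ℝ) K]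
      have h3 : ((K).factorial : ℝ) ≠ 0 := Nat.cast_ne_zero.mpr (Nat.factorial_ne_zero _)
      have h5 : (4:ℝ)^K ≠ 0 := by positivity
      push_cast
      field_simp
      ring
    linear_combination e1' + e2 + e3' + e4
  · -- odd case N = 2K+1
    subst hK
    have hr2 : (2*K+1+2)/2 + 1 = K+2 := by omega
    have hr1 : (2*K+1+1)/2 + 1 = K+2 := by omega
    have hr0 : (2*K+1)/2 + 1 = K+1 := by omega
    rw [hr2, hr1, hr0]
    have e1 : ∑ m ∈ Finset.range (K+2), (((2*K+1+2).factorial : ℝ) * FH y (2*K+1+2) m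
        - ((2*K+1+1).factorial : ℝ) * y * FH y (2*K+1+1) m) = ∑ m ∈ Finset.range (K+2), GH y (2*K+1) m :=
      Finset.sum_congr rfl (fun m hm => hstep1 y (2*K+1) m (by
        rw [Finset.mem_range] at hm; omega))
    have e1' : ((2*K+1+2).factorial : ℝ) * (∑ m ∈ Finset.range (K+2), FH y (2*K+1+2) m)
        - ((2*K+1+1).factorial : ℝ) * y * (∑ m ∈ Finset.range (K+2), FH y (2*K+1+1) m)
        = ∑ m ∈ Finset.range (K+2), GH y (2*K+1) m := by
      rw [← e1, Finset.sum_sub_distrib, ← Finset.mul_sum, ← Finset.mul_sum]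
    have e2 : ∑ m ∈ Finset.range (K+2), GH y (2*K+1) m = ∑ m ∈ Finset.range (K+1), GH y (2*K+1) (m+1) := by
      rw [Finset.sum_range_succ' (GH y (2*K+1)) (K+1), GH_zero, add_zero]
    have e3' : ∑ m ∈ Finset.range (K+1), GH y (2*K+1) (m+1)
        = -((((2*K+1):ℕ):ℝ)+1)/2 * ((2*K+1).factorial : ℝ) * (∑ m ∈ Finset.range (K+1), FH y (2*K+1) m) := by
      rw [Finset.mul_sum]
      apply Finset.sum_congr rfl
      intro m hm
      rw [Finset.mem_range] at hm
      rw [hstep2 y (2*K+1) m (by omega)]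
      ring
    linear_combination e1' + e2 + e3'

/-! ### Scaled Hermite and the coefficient table -/

noncomputable def hh (x : ℝ) (m : ℕ) : ℝ := (Real.sqrt 2)^m * monicHermite m (x/(2*Real.sqrt 2))

lemma hh_zero (x : ℝ) : hh x 0 = 1 := by simp [hh, monicHermite_zero]

lemma hh_one (x : ℝ) : hh x 1 = x/2 := by
  have h2 : Real.sqrt 2 ≠ 0 := by positivity
  simp [hh, monicHermite_one]
  field_simp

lemma hh_rec (x : ℝ) (m : ℕ) : hh x (m+2) = (x/2) * hh x (m+1) - ((m:ℝ)+1) * hh x m := by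
  have h2 : Real.sqrt 2 * Real.sqrt 2 = 2 := Real.mul_self_sqrt (by norm_num)
  have h2' : Real.sqrt 2 ≠ 0 := by positivity
  have key : Real.sqrt 2 * (x / (2*Real.sqrt 2)) = x/2 := by
    rw [mul_div_assoc', div_eq_div_iff (by positivity) (by norm_num)]
    ring
  unfold hh
  rw [monicHermite_rec m (x/(2*Real.sqrt 2))]
  rw [pow_succ, pow_succ]
  linear_combination (Real.sqrt 2^m * Real.sqrt 2 * monicHermite (m+1) (x/(2*Real.sqrt 2))) * key
    - (((m:ℝ)+1)/2 * Real.sqrt 2^m * monicHermite m (x/(2*Real.sqrt 2))) * h2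

lemma hh_rec' (x : ℝ) (M : ℕ) : hh x (M+1) = (x/2) * hh x M - (M:ℝ) * hh x (M-1) := by
  cases M with
  | zero => simp [hh_zero, hh_one]
  | succ M => rw [hh_rec]; push_cast; ring_nf

noncomputable def ddc (x : ℝ) (N j : ℕ) : ℝ := (Nat.descFactorial N j : ℝ) * hh x (N-j)

lemma ddc_rec (x : ℝ) (N j : ℕ) :
    ddc x (N+1) j = (x/2) * ddc x N j + (j:ℝ) * ddc x N (j-1) - ddc x N (j+1) := by
  unfold ddc
  cases j with
  | zero =>
    simp only [Nat.descFactorial_zero, Nat.descFactorial_one, Nat.descFactorial_succ,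
      Nat.cast_zero, Nat.cast_one, one_mul, zero_mul, Nat.sub_zero, zero_add, add_zero,
      Nat.descFactorial_zero, mul_one]
    rw [hh_rec' x N]
  | succ j =>
    rw [Nat.succ_descFactorial_succ]
    simp only [Nat.add_sub_cancel]
    rcases le_or_gt (j+1) N with h | h
    · -- j+1 ≤ N
      rw [Nat.descFactorial_succ N (j+1), Nat.descFactorial_succ N j]
      obtain ⟨M, hM⟩ : ∃ M, N = M + (j+1) := ⟨N-(j+1), by omega⟩
      subst hM
      have h1 : M + (j+1) + 1 - (j+1) = M+1 := by omega
      have h2 : M + (j+1) - (j+1) = M := by omega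
      have h3 : M + (j+1) - (j+1+1) = M-1 := by omega
      have h4 : M + (j+1) - j = M+1 := by omega
      rw [h1, h2, h3, h4]
      rw [hh_rec' x M]
      push_cast
      ring
    · have hd2 : N.descFactorial (j+1) = 0 := Nat.descFactorial_eq_zero_iff_lt.mpr (by omega)
      have hd3 : N.descFactorial (j+1+1) = 0 := Nat.descFactorial_eq_zero_iff_lt.mpr (by omega)
      rw [hd2, hd3]
      rcases eq_or_lt_of_le (show N ≤ j from by omega) with h' | h'
      · -- j = N
        subst h'
        have h6 : N + 1 - (N+1) = 0 := by omega
        have h7 : N - N = 0 := by omega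
        rw [h6, h7]
        push_cast
        ring
      · have hd5 : N.descFactorial j = 0 := Nat.descFactorial_eq_zero_iff_lt.mpr (by omega)
        rw [hd5]
        push_cast
        ring

/-! ### The main tower induction -/

lemma tower (n : ℕ) (x : ℝ) : ∀ N j r : ℕ,
    Filter.Tendsto (fun p : ℝ×ℝ => dd^[j] (TT (qq n p.1 p.2) (ZZ x p.1 p.2) N) r / vv p.1 p.2^(N+j))
      Lfil (nhds (ddc x N j)) := by
  intro N
  induction N with
  | zero =>
    intro j r
    cases j with
    | zero =>
      have hval : ddc x 0 0 = 1 := by simp [ddc, hh_zero]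
      rw [hval]
      apply Filter.Tendsto.congr (f₁ := fun _ : ℝ×ℝ => (1:ℝ)) _ tendsto_const_nhds
      intro p
      simp [TT_zero]
    | succ j =>
      have hval : ddc x 0 (j+1) = 0 := by simp [ddc]
      rw [hval]
      apply Filter.Tendsto.congr (f₁ := fun _ : ℝ×ℝ => (0:ℝ)) _ tendsto_const_nhds
      intro p
      have hTT : TT (qq n p.1 p.2) (ZZ x p.1 p.2) 0 = fun _ => (1:ℝ) := funext (TT_zero _ _)
      rw [hTT, dd_const]
      simp
  | succ N ih =>
    intro j r
    -- division-free key identity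
    have key : ∀ p : ℝ×ℝ,
        dd^[j] (TT (qq n p.1 p.2) (ZZ x p.1 p.2) (N+1)) r
          = (qq n p.1 p.2 (r+(N+1)) - ZZ x p.1 p.2) * dd^[j] (TT (qq n p.1 p.2) (ZZ x p.1 p.2) N) r
            + (∑ i ∈ Finset.range j, ((j.choose (i+1)):ℝ) * dd^[i+1] (qq n p.1 p.2) (r+(N+1))
                * dd^[j-(i+1)] (TT (qq n p.1 p.2) (ZZ x p.1 p.2) N) (r+(i+1)))
            - ZZ x p.1 p.2 * dd^[j+1] (TT (qq n p.1 p.2) (ZZ x p.1 p.2) N) r := by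
      intro p
      set q := qq n p.1 p.2 with hq
      set Z := ZZ x p.1 p.2 with hZ
      set T := TT q Z N with hT
      have hTT : TT q Z (N+1) = fun r' => q (r'+(N+1)) * T r' - Z * T (r'+1) := by
        funext r'
        rw [TT_succ]
        rw [Nat.add_comm (N+1) r']
      have e1 : dd^[j] (TT q Z (N+1)) r
          = dd^[j] (fun r' => q (r'+(N+1)) * T r') r - dd^[j] (fun r' => Z * T (r'+1)) r := by
        rw [hTT]
        exact dd_sub _ _ j r
      have e2 : dd^[j] (fun r' => Z * T (r'+1)) r = Z * (dd^[j] T r + dd^[j+1] T r) := by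
        calc dd^[j] (fun r' => Z * T (r'+1)) r = Z * dd^[j] (fun r' => T (r'+1)) r :=
              dd_const_mul Z _ j r
        _ = Z * dd^[j] T (r+1) := by rw [dd_shift T j]
        _ = Z * (dd^[j] T r + dd^[j+1] T r) := by rw [dd_iter_succ]; ring
      have e3 : dd^[j] (fun r' => q (r'+(N+1)) * T r') r
          = q (r+(N+1)) * dd^[j] T r
            + ∑ i ∈ Finset.range j, ((j.choose (i+1)):ℝ) * dd^[i+1] q (r+(N+1)) * dd^[j-(i+1)] T (r+(i+1)) := by
        calc dd^[j] (fun r' => q (r'+(N+1)) * T r') r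
            = ∑ i ∈ Finset.range (j+1), ((j.choose i):ℝ) * dd^[i] (fun r' => q (r'+(N+1))) r * dd^[j-i] T (r+i) :=
              dd_leibniz _ T j r
        _ = ∑ i ∈ Finset.range (j+1), ((j.choose i):ℝ) * dd^[i] q (r+(N+1)) * dd^[j-i] T (r+i) := by
              apply Finset.sum_congr rfl
              intro i _
              rw [dd_shift_c q (N+1) i r]
        _ = q (r+(N+1)) * dd^[j] T r
            + ∑ i ∈ Finset.range j, ((j.choose (i+1)):ℝ) * dd^[i+1] q (r+(N+1)) * dd^[j-(i+1)] T (r+(i+1)) := by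
              rw [Finset.sum_range_succ' (fun i => ((j.choose i):ℝ) * dd^[i] q (r+(N+1)) * dd^[j-i] T (r+i)) j]
              simp only [Nat.choose_zero_right, Nat.cast_one, Function.iterate_zero, id_eq,
                Nat.sub_zero, add_zero, one_mul]
              ring
      rw [e1, e2, e3]
      ring
    -- divided identity, eventually
    have hdiv : (fun p : ℝ×ℝ =>
        ((qq n p.1 p.2 (r+(N+1)) - ZZ x p.1 p.2)/vv p.1 p.2)
            * (dd^[j] (TT (qq n p.1 p.2) (ZZ x p.1 p.2) N) r / vv p.1 p.2^(N+j))
          + (∑ i ∈ Finset.range j, ((j.choose (i+1)):ℝ)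
              * (dd^[i+1] (qq n p.1 p.2) (r+(N+1)) / vv p.1 p.2^(i+1+1))
              * (dd^[j-(i+1)] (TT (qq n p.1 p.2) (ZZ x p.1 p.2) N) (r+(i+1)) / vv p.1 p.2^(N+(j-(i+1)))))
          - ZZ x p.1 p.2 * (dd^[j+1] (TT (qq n p.1 p.2) (ZZ x p.1 p.2) N) r / vv p.1 p.2^(N+(j+1))))
        =ᶠ[Lfil] (fun p : ℝ×ℝ =>
          dd^[j] (TT (qq n p.1 p.2) (ZZ x p.1 p.2) (N+1)) r / vv p.1 p.2^(N+1+j)) := by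
      filter_upwards [ev_pos] with p hp
      obtain ⟨hs, ht⟩ := hp
      have hv : vv p.1 p.2 ≠ 0 := ne_of_gt (vv_pos hs ht)
      rw [key p]
      set v := vv p.1 p.2 with hvdef
      -- sum part
      have hsumeq : ∑ i ∈ Finset.range j, ((j.choose (i+1)):ℝ)
              * (dd^[i+1] (qq n p.1 p.2) (r+(N+1)) / v^(i+1+1))
              * (dd^[j-(i+1)] (TT (qq n p.1 p.2) (ZZ x p.1 p.2) N) (r+(i+1)) / v^(N+(j-(i+1))))
          = (∑ i ∈ Finset.range j, ((j.choose (i+1)):ℝ) * dd^[i+1] (qq n p.1 p.2) (r+(N+1))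
                * dd^[j-(i+1)] (TT (qq n p.1 p.2) (ZZ x p.1 p.2) N) (r+(i+1))) / v^(N+1+j) := by
        rw [Finset.sum_div]
        apply Finset.sum_congr rfl
        intro i hi
        rw [Finset.mem_range] at hi
        have hexp : (i+1+1)+(N+(j-(i+1))) = N+1+j := by omega
        rw [show v^(N+1+j) = v^(i+1+1) * v^(N+(j-(i+1))) from by rw [← pow_add, hexp]]
        have hv1 : v^(i+1+1) ≠ 0 := pow_ne_zero _ hv
        have hv2 : v^(N+(j-(i+1))) ≠ 0 := pow_ne_zero _ hv
        field_simp
      rw [hsumeq]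
      have h1 : ((qq n p.1 p.2 (r+(N+1)) - ZZ x p.1 p.2)/v)
            * (dd^[j] (TT (qq n p.1 p.2) (ZZ x p.1 p.2) N) r / v^(N+j))
          = (qq n p.1 p.2 (r+(N+1)) - ZZ x p.1 p.2)
            * dd^[j] (TT (qq n p.1 p.2) (ZZ x p.1 p.2) N) r / v^(N+1+j) := by
        rw [show v^(N+1+j) = v * v^(N+j) from by
          rw [show N+1+j = (N+j)+1 from by omega, pow_succ']]
        have hv2 : v^(N+j) ≠ 0 := pow_ne_zero _ hv
        field_simp
      have h2 : ZZ x p.1 p.2 * (dd^[j+1] (TT (qq n p.1 p.2) (ZZ x p.1 p.2) N) r / v^(N+(j+1)))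
          = ZZ x p.1 p.2 * dd^[j+1] (TT (qq n p.1 p.2) (ZZ x p.1 p.2) N) r / v^(N+1+j) := by
        rw [show N+(j+1) = N+1+j from by omega, mul_div_assoc]
      rw [h1, h2, ← add_div, ← sub_div]
    -- limits
    have hA : Filter.Tendsto (fun p : ℝ×ℝ =>
        ((qq n p.1 p.2 (r+(N+1)) - ZZ x p.1 p.2)/vv p.1 p.2)
          * (dd^[j] (TT (qq n p.1 p.2) (ZZ x p.1 p.2) N) r / vv p.1 p.2^(N+j))) Lfil
        (nhds ((x/2) * ddc x N j)) :=
      (tendsto_qZ n (r+(N+1)) x).mul (ih j r)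
    have hB : Filter.Tendsto (fun p : ℝ×ℝ =>
        ZZ x p.1 p.2 * (dd^[j+1] (TT (qq n p.1 p.2) (ZZ x p.1 p.2) N) r / vv p.1 p.2^(N+(j+1)))) Lfil
        (nhds (1 * ddc x N (j+1))) :=
      (tendsto_ZZ1 x).mul (ih (j+1) r)
    have hsum : Filter.Tendsto (fun p : ℝ×ℝ =>
        ∑ i ∈ Finset.range j, ((j.choose (i+1)):ℝ)
              * (dd^[i+1] (qq n p.1 p.2) (r+(N+1)) / vv p.1 p.2^(i+1+1))
              * (dd^[j-(i+1)] (TT (qq n p.1 p.2) (ZZ x p.1 p.2) N) (r+(i+1)) / vv p.1 p.2^(N+(j-(i+1))))) Lfil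
        (nhds (∑ i ∈ Finset.range j, (if i = 0 then (j:ℝ) * ddc x N (j-1) else 0))) := by
      apply tendsto_finset_sum
      intro i hi
      rw [Finset.mem_range] at hi
      cases i with
      | zero =>
        simp only [if_pos rfl]
        have hq1 : Filter.Tendsto (fun p : ℝ×ℝ =>
            dd^[0+1] (qq n p.1 p.2) (r+(N+1)) / vv p.1 p.2^(0+1+1)) Lfil (nhds 1) :=
          tendsto_ddq1 n (r+(N+1))
        have := ((hq1.const_mul ((j.choose (0+1)):ℝ)).mul (ih (j-(0+1)) (r+(0+1))))
        rw [show ((j.choose (0+1)):ℝ) * 1 = (j:ℝ) from by rw [Nat.choose_one_right]; ring] at this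
        exact this
      | succ i =>
        simp only [if_neg (Nat.succ_ne_zero i)]
        have hq0 : Filter.Tendsto (fun p : ℝ×ℝ =>
            dd^[i+1+1] (qq n p.1 p.2) (r+(N+1)) / vv p.1 p.2^(i+1+1+1)) Lfil (nhds 0) :=
          tendsto_ddqi n (r+(N+1)) i
        have := ((hq0.const_mul ((j.choose (i+1+1)):ℝ)).mul (ih (j-(i+1+1)) (r+(i+1+1))))
        simpa using this
    have hSL : (∑ i ∈ Finset.range j, (if i = 0 then (j:ℝ) * ddc x N (j-1) else 0))
        = (j:ℝ) * ddc x N (j-1) := by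
      rw [Finset.sum_ite_eq' (Finset.range j) 0 (fun _ => (j:ℝ) * ddc x N (j-1))]
      by_cases hj : 0 < j
      · rw [if_pos (Finset.mem_range.mpr hj)]
      · have : j = 0 := by omega
        subst this
        simp
    have htotal := (hA.add hsum).sub hB
    rw [hSL] at htotal
    have hval : (x/2) * ddc x N j + (j:ℝ) * ddc x N (j-1) - 1 * ddc x N (j+1) = ddc x (N+1) j := by
      rw [ddc_rec]; ring
    rw [hval] at htotal
    exact htotal.congr' hdiv

/-! ### The algebraic identity -/

lemma rho_eq {s t : ℝ} (hs : 0 < s) (ht : 0 < t) :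
    jacobiRho (1/s) (1/t) = (s+t)*Real.sqrt (s+t)/(s*t) := by
  unfold jacobiRho
  have h1 : 1/s + 1/t = (s+t)/(s*t) := by field_simp; ring
  have h2 : (1/s)*(1/t) = 1/(s*t) := by field_simp
  rw [h1, h2]
  have hst : (0:ℝ) < s*t := by positivity
  have hstt : (0:ℝ) < (s+t)/(s*t) := by positivity
  rw [show ((3:ℝ)/2) = (1:ℝ) + 1/2 from by norm_num, Real.rpow_add hstt, Real.rpow_one,
    ← Real.sqrt_eq_rpow]
  rw [Real.sqrt_div (by linarith : (0:ℝ) ≤ s+t), one_div (s*t), Real.sqrt_inv]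
  have h3 : (0:ℝ) < Real.sqrt (s*t) := Real.sqrt_pos.mpr hst
  field_simp

lemma sigma_eq {s t : ℝ} (hs : 0 < s) (ht : 0 < t) :
    jacobiSigma (1/s) (1/t) = (t-s)/(s+t) := by
  unfold jacobiSigma
  have h1 : 1/s - 1/t = (t-s)/(s*t) := by field_simp
  have h2 : 1/s + 1/t = (s+t)/(s*t) := by field_simp; ring
  rw [h1, h2, div_div_div_cancel_right₀]
  positivity

lemma rescaled_eq (n : ℕ) (x : ℝ) {s t : ℝ} (hs : 0 < s) (ht : 0 < t) :
    rescaledJacobi (1/s) (1/t) n x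
      = (2:ℝ)^n * (TT (qq n s t) (ZZ x s t) n 0 / vv s t^n) := by
  have hst : (0:ℝ) < s + t := by linarith
  have hW : 0 < Real.sqrt (s+t) := Real.sqrt_pos.mpr hst
  have hW2 : Real.sqrt (s+t)^2 = s+t := Real.sq_sqrt hst.le
  have hrho : jacobiRho (1/s) (1/t) = (s+t)*Real.sqrt (s+t)/(s*t) := rho_eq hs ht
  unfold rescaledJacobi
  rw [monicJacobi_eq]
  set X := x / jacobiRho (1/s) (1/t) - jacobiSigma (1/s) (1/t) with hX
  have hXm1 : X - 1 = -2*(t/(s+t)) * ZZ x s t := by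
    rw [hX, hrho, sigma_eq hs ht]
    unfold ZZ vv
    field_simp
    ring
  have hpoch1 : ∀ k : ℕ, poch ((n:ℝ)+1/s+1/t+1) k
      = ((s+t)/(s*t))^k * ∏ j ∈ Finset.range k, (1 + uu s t*((n:ℝ)+1+(j:ℝ))) := by
    intro k
    rw [show ((s+t)/(s*t))^k = ∏ _j ∈ Finset.range k, ((s+t)/(s*t)) from
      ((by rw [Finset.prod_const, Finset.card_range] :
        (∏ _j ∈ Finset.range k, ((s+t)/(s*t))) = ((s+t)/(s*t))^k)).symm,
      ← Finset.prod_mul_distrib, poch]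
    apply Finset.prod_congr rfl
    intro j _
    unfold uu
    field_simp
    ring
  have hGsplit : ∀ k, k ≤ n → (∏ j ∈ Finset.range n, (1 + uu s t*((n:ℝ)+1+(j:ℝ))))
      = (∏ j ∈ Finset.range k, (1 + uu s t*((n:ℝ)+1+(j:ℝ))))
        * ∏ i ∈ Finset.Ico (k+1) (n+1), (1 + uu s t*((n:ℝ)+(i:ℝ))) := by
    intro k hk
    rw [Finset.range_eq_Ico, ← Finset.prod_Ico_consecutive _ (Nat.zero_le k) hk, ← Finset.range_eq_Ico]
    congr 1
    rw [Finset.prod_Ico_eq_prod_range, Finset.prod_Ico_eq_prod_range]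
    rw [show n+1-(k+1) = n-k from by omega]
    apply Finset.prod_congr rfl
    intro i _
    congr 1
    push_cast
    ring
  have hpoch2 : ∀ k, k ≤ n → poch ((1/s)+(k:ℝ)+1) (n-k)
      = (1/s)^(n-k) * ∏ i ∈ Finset.Ico (k+1) (n+1), (1+s*(i:ℝ)) := by
    intro k hk
    rw [show ((1:ℝ)/s)^(n-k) = ∏ _j ∈ Finset.range (n-k), ((1:ℝ)/s) from
      ((by rw [Finset.prod_const, Finset.card_range] :
        (∏ _j ∈ Finset.range (n-k), ((1:ℝ)/s)) = ((1:ℝ)/s)^(n-k))).symm]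
    rw [Finset.prod_Ico_eq_prod_range, show n+1-(k+1) = n-k from by omega, ← Finset.prod_mul_distrib, poch]
    apply Finset.prod_congr rfl
    intro j _
    push_cast
    field_simp
    ring
  have hqprod : ∀ k : ℕ, (∏ m ∈ Finset.Ico (k+1) (n+1), qq n s t (m+0))
      = (∏ i ∈ Finset.Ico (k+1) (n+1), (1+s*(i:ℝ)))
        / ∏ i ∈ Finset.Ico (k+1) (n+1), (1 + uu s t*((n:ℝ)+(i:ℝ))) := by
    intro k
    rw [← Finset.prod_div_distrib]
    apply Finset.prod_congr rfl
    intro m _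
    rfl
  rw [TT]
  rw [mul_div_assoc', Finset.mul_sum, Finset.sum_div]
  rw [show (2:ℝ)^n * ((∑ k ∈ Finset.range (n+1), (-1:ℝ)^k * (n.choose k : ℝ) * (ZZ x s t)^k
        * ∏ m ∈ Finset.Ico (k+1) (n+1), qq n s t (m+0)) / vv s t^n)
      = ∑ k ∈ Finset.range (n+1), (2:ℝ)^n * ((-1:ℝ)^k * (n.choose k : ℝ) * (ZZ x s t)^k
        * ∏ m ∈ Finset.Ico (k+1) (n+1), qq n s t (m+0)) / vv s t^n from by
    rw [mul_div_assoc', Finset.mul_sum, Finset.sum_div]]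
  apply Finset.sum_congr rfl
  intro k hk
  rw [Finset.mem_range] at hk
  have hk' : k ≤ n := by omega
  rw [hpoch1 k, hpoch1 n, hpoch2 k hk', hXm1, hqprod k, hGsplit k hk', hrho]
  unfold vv
  set W := Real.sqrt (s+t) with hWdef
  set Z := ZZ x s t with hZdef
  set P1 := ∏ i ∈ Finset.Ico (k+1) (n+1), (1+s*(i:ℝ)) with hP1def
  set P2 := ∏ i ∈ Finset.Ico (k+1) (n+1), (1 + uu s t*((n:ℝ)+(i:ℝ))) with hP2def
  set Gk := ∏ j ∈ Finset.range k, (1 + uu s t*((n:ℝ)+1+(j:ℝ))) with hGkdef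
  have hGk : (0:ℝ) < Gk := by
    rw [hGkdef]; exact Finset.prod_pos (fun j _ => one_add_uu_pos hs ht (by positivity))
  have hP2 : (0:ℝ) < P2 := by
    rw [hP2def]; exact Finset.prod_pos (fun i _ => one_add_uu_pos hs ht (by positivity))
  obtain ⟨m, hm⟩ : ∃ m, n = k + m := ⟨n - k, by omega⟩
  rw [show n - k = m from by omega]
  rw [show ((s+t)/(s*t))^n = ((s+t)/(s*t))^k * ((s+t)/(s*t))^m from by rw [← pow_add, ← hm]]
  rw [show ((s+t)*W/(s*t))^n = ((s+t)*W/(s*t))^k * ((s+t)*W/(s*t))^m from by rw [← pow_add, ← hm]]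
  rw [show (s/W)^n = (s/W)^k * (s/W)^m from by rw [← pow_add, ← hm]]
  rw [show (2:ℝ)^n = (2:ℝ)^k * (2:ℝ)^m from by rw [← pow_add, ← hm]]
  have hWne : W ≠ 0 := ne_of_gt hW
  have hP2ne : P2 ≠ 0 := ne_of_gt hP2
  have hGkne : Gk ≠ 0 := ne_of_gt hGk
  set SS := s + t with hSSdef
  have hSSne : SS ≠ 0 := by rw [hSSdef]; positivity
  clear_value SS Z W P1 P2 Gk
  rw [show (-2*(t/SS)*Z)^k = (-1:ℝ)^k * 2^k * (t/SS)^k * Z^k from by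
    rw [mul_pow, mul_pow, show (-2:ℝ) = (-1)*2 from by norm_num, mul_pow]]
  have hsne : s ≠ 0 := ne_of_gt hs
  have htne : t ≠ 0 := ne_of_gt ht
  field_simp
  simp only [div_pow]
  field_simp
  ring

/-! ### Final assembly -/

theorem rescaled_jacobi_to_hermite' (n : ℕ) (x : ℝ) :
    Filter.Tendsto
      (fun p : ℝ × ℝ => rescaledJacobi (1 / p.1) (1 / p.2) n x)
      (nhdsWithin ((0 : ℝ), (0 : ℝ)) (Set.Ioi 0 ×ˢ Set.Ioi 0))
      (nhds ((2 * Real.sqrt 2) ^ n * monicHermite n (x / (2 * Real.sqrt 2)))) := by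
  have h0 := tower n x n 0 0
  simp only [Function.iterate_zero, id_eq, Nat.add_zero] at h0
  have h1 : Filter.Tendsto (fun p : ℝ×ℝ =>
      (2:ℝ)^n * (TT (qq n p.1 p.2) (ZZ x p.1 p.2) n 0 / vv p.1 p.2^n)) Lfil
      (nhds ((2:ℝ)^n * ddc x n 0)) := h0.const_mul _
  have htarget : (2:ℝ)^n * ddc x n 0 = (2 * Real.sqrt 2) ^ n * monicHermite n (x / (2 * Real.sqrt 2)) := by
    unfold ddc hh
    simp only [Nat.descFactorial_zero, Nat.cast_one, one_mul, Nat.sub_zero]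
    rw [mul_pow]
    ring
  rw [← htarget]
  apply h1.congr'
  filter_upwards [ev_pos] with p hp
  exact (rescaled_eq n x hp.1 hp.2).symm

end JacobiHermiteAux

/-- `p_n(x; 1/s, 1/t) → (2√2)^n h_n(x/(2√2))` as `(s,t) → (0,0)` with `s,t > 0`. -/
theorem rescaled_jacobi_to_hermite (n : ℕ) (x : ℝ) :
    Filter.Tendsto
      (fun p : ℝ × ℝ => rescaledJacobi (1 / p.1) (1 / p.2) n x)
      (nhdsWithin ((0 : ℝ), (0 : ℝ)) (Set.Ioi 0 ×ˢ Set.Ioi 0))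
      (nhds ((2 * Real.sqrt 2) ^ n * monicHermite n (x / (2 * Real.sqrt 2)))) := by
  exact rescaled_jacobi_to_hermite' n x
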